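/- Let Z be a smooth variety, X ⊂ Z a smooth closed subvariety of codimension d with conormal bundle C, Y an effective divisor with O(−Y) ⊆ I_X^k and k maximal with this property. Let s ∈ Γ(P_X(C), O_{P_X(C)}(k) ⊗ π_X^*(O(Y)|_X)) be the section induced by the composite O(−Y)|_X → Sym^k(C) → (pushforward of O(k)). If Y \ X is smooth and the zero scheme of s is a smooth effective divisor of P_X(C) ≅ E_X(Z), then the strict transform Ỹ of Y in Bl_X(Z) is smooth, equals the effective divisor π^*Y − kE_X(Z), and its intersection with the exceptional divisor E_X(Z) is the zero scheme of s. -/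
import Mathlib


open MvPolynomial


section Helpers

variable {F : Type*} [CommRing F]

private lemma my_eval_bind₁ {ι : Type*} (x : ι → F) (σ : ι → MvPolynomial ι F)
    (φ : MvPolynomial ι F) :
    eval x (bind₁ σ φ) = eval (fun u => eval x (σ u)) φ := by
  induction φ using MvPolynomial.induction_on with
  | C a => simp
  | add p q hp hq => simp [hp, hq]
  | mul_X p n ih => simp [ih]

private lemma my_pdX {ι : Type*} [DecidableEq ι] (v w : ι) :
    pderiv v (X w : MvPolynomial ι F) = if v = w then 1 else 0 := by
  rcases eq_or_ne v w with h | h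
  · subst h; simp
  · rw [pderiv_X_of_ne h.symm, if_neg h]

private lemma my_pderiv_bind₁ {ι : Type*} [Fintype ι] [DecidableEq ι]
    (σ : ι → MvPolynomial ι F) (φ : MvPolynomial ι F) (v : ι) :
    pderiv v (bind₁ σ φ) = ∑ u : ι, bind₁ σ (pderiv u φ) * pderiv v (σ u) := by
  induction φ using MvPolynomial.induction_on with
  | C a => simp
  | add p q hp hq =>
      simp only [map_add, hp, hq, add_mul, Finset.sum_add_distrib]
  | mul_X p n ih =>
      have hb : bind₁ σ (p * X n) = bind₁ σ p * σ n := by rw [map_mul, bind₁_X_right]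
      have hterm : ∀ u : ι, bind₁ σ (pderiv u (p * X n)) * pderiv v (σ u)
          = bind₁ σ (pderiv u p) * pderiv v (σ u) * σ n
            + (if u = n then bind₁ σ p * pderiv v (σ u) else 0) := by
        intro u
        rw [pderiv_mul, my_pdX, map_add, map_mul, bind₁_X_right, add_mul]
        rcases eq_or_ne u n with h | h
        · subst h; rw [if_pos rfl, if_pos rfl, map_mul, map_one, mul_one]; ring
        · rw [if_neg h, if_neg h, map_mul, map_zero, mul_zero, zero_mul, add_zero]; ring
      rw [hb, pderiv_mul, ih, Finset.sum_congr rfl fun u _ => hterm u,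
        Finset.sum_add_distrib, Finset.sum_ite_eq' Finset.univ n
          (fun u => bind₁ σ p * pderiv v (σ u)), if_pos (Finset.mem_univ n), Finset.sum_mul]

end Helpers



section Hom

variable {F : Type*} [CommRing F]

private lemma hom_bind_subst {c d : ℕ} (j : Fin d) (k : ℕ)
    (fk : MvPolynomial (Fin c ⊕ Fin d) F)
    (hfkhom : ∀ m ∈ fk.support, (∑ i : Fin d, m (Sum.inr i)) = k) :
    bind₁ (Sum.elim (fun i => (X (Sum.inl i) : MvPolynomial (Fin c ⊕ Fin d) F))
        (fun i => if i = j then X (Sum.inr j) else X (Sum.inr j) * X (Sum.inr i))) fk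
      = X (Sum.inr j) ^ k * bind₁ (fun v => if v = Sum.inr j then 1 else X v) fk := by
  set σ : (Fin c ⊕ Fin d) → MvPolynomial (Fin c ⊕ Fin d) F :=
    Sum.elim (fun i => X (Sum.inl i))
      (fun i => if i = j then X (Sum.inr j) else X (Sum.inr j) * X (Sum.inr i)) with hσ
  set δ : (Fin c ⊕ Fin d) → MvPolynomial (Fin c ⊕ Fin d) F :=
    fun v => if v = Sum.inr j then 1 else X v with hδ
  have key : ∀ m ∈ fk.support,
      bind₁ σ (monomial m (coeff m fk))
        = X (Sum.inr j) ^ k * bind₁ δ (monomial m (coeff m fk)) := by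
    intro m hm
    have hw : ∀ v : Fin c ⊕ Fin d,
        σ v = X (Sum.inr j) ^ (Sum.elim (fun _ => 0) (fun _ => 1) v) * δ v := by
      intro v
      cases v with
      | inl i => simp [hσ, hδ]
      | inr i =>
          rcases eq_or_ne i j with h | h
          · subst h; simp [hσ, hδ]
          · simp [hσ, hδ, h]
    rw [bind₁_monomial, bind₁_monomial,
      Finset.prod_congr rfl fun v _ => by rw [hw v, mul_pow, ← pow_mul],
      Finset.prod_mul_distrib, Finset.prod_pow_eq_pow_sum]
    have hsum : ∑ v ∈ m.support, (Sum.elim (fun _ => 0) (fun _ => 1) v) * m v = k := by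
      rw [Finset.sum_subset (Finset.subset_univ m.support)]
      · rw [Fintype.sum_sum_type]
        simpa using hfkhom m hm
      · intro v _ hv
        rw [Finsupp.notMem_support_iff.mp hv, mul_zero]
    rw [hsum]; ring
  calc bind₁ σ fk = ∑ m ∈ fk.support, bind₁ σ (monomial m (coeff m fk)) := by
        rw [← map_sum, ← fk.as_sum]
    _ = ∑ m ∈ fk.support, X (Sum.inr j) ^ k * bind₁ δ (monomial m (coeff m fk)) :=
        Finset.sum_congr rfl key
    _ = X (Sum.inr j) ^ k * bind₁ δ fk := by rw [← Finset.mul_sum, ← map_sum, ← fk.as_sum]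

private lemma hom_euler {c d : ℕ} (k : ℕ)
    (fk : MvPolynomial (Fin c ⊕ Fin d) F)
    (hfkhom : ∀ m ∈ fk.support, (∑ i : Fin d, m (Sum.inr i)) = k) :
    ∑ i : Fin d, X (Sum.inr i) * pderiv (Sum.inr i) fk = C (k : F) * fk := by
  have key : ∀ m ∈ fk.support,
      ∑ i : Fin d, X (Sum.inr i) * pderiv (Sum.inr i) (monomial m (coeff m fk))
        = C (k : F) * monomial m (coeff m fk) := by
    intro m hm
    have hterm : ∀ i : Fin d,
        (X (Sum.inr i) : MvPolynomial (Fin c ⊕ Fin d) F)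
            * pderiv (Sum.inr i) (monomial m (coeff m fk))
          = monomial m (coeff m fk * (m (Sum.inr i) : F)) := by
      intro i
      rw [pderiv_monomial]
      rcases Nat.eq_zero_or_pos (m (Sum.inr i)) with h | h
      · rw [h]; simp
      · have hle : Finsupp.single (Sum.inr i : Fin c ⊕ Fin d) 1 ≤ m :=
          Finsupp.single_le_iff.mpr h
        have hX : (X (Sum.inr i) : MvPolynomial (Fin c ⊕ Fin d) F)
            = monomial (Finsupp.single (Sum.inr i) 1) 1 := by
          rw [← X_pow_eq_monomial, pow_one]
        rw [hX, monomial_mul, one_mul, add_tsub_cancel_of_le hle]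
    rw [Finset.sum_congr rfl fun i _ => hterm i]
    rw [← map_sum, ← Finset.mul_sum, ← Nat.cast_sum, hfkhom m hm, C_mul_monomial, mul_comm]
  calc ∑ i : Fin d, X (Sum.inr i) * pderiv (Sum.inr i) fk
      = ∑ i : Fin d, ∑ m ∈ fk.support,
          X (Sum.inr i) * pderiv (Sum.inr i) (monomial m (coeff m fk)) := by
        refine Finset.sum_congr rfl fun i _ => ?_
        rw [← Finset.mul_sum, ← map_sum, ← fk.as_sum]
    _ = ∑ m ∈ fk.support, ∑ i : Fin d,
          X (Sum.inr i) * pderiv (Sum.inr i) (monomial m (coeff m fk)) := Finset.sum_comm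
    _ = ∑ m ∈ fk.support, C (k : F) * monomial m (coeff m fk) := Finset.sum_congr rfl key
    _ = C (k : F) * fk := by rw [← Finset.mul_sum, ← fk.as_sum]

private lemma hom_scale {c d : ℕ} (k : ℕ)
    (fk : MvPolynomial (Fin c ⊕ Fin d) F)
    (hfkhom : ∀ m ∈ fk.support, (∑ i : Fin d, m (Sum.inr i)) = k)
    (x : Fin c → F) (q : Fin d → F) (t : F) :
    eval (Sum.elim x fun i => t * q i) fk = t ^ k * eval (Sum.elim x q) fk := by
  have key : ∀ m ∈ fk.support,
      eval (Sum.elim x fun i => t * q i) (monomial m (coeff m fk))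
        = t ^ k * eval (Sum.elim x q) (monomial m (coeff m fk)) := by
    intro m hm
    rw [eval_monomial, eval_monomial,
      Finsupp.prod_fintype _ _ (fun v => pow_zero _),
      Finsupp.prod_fintype _ _ (fun v => pow_zero _),
      Fintype.prod_sum_type, Fintype.prod_sum_type]
    simp only [Sum.elim_inl, Sum.elim_inr, mul_pow]
    rw [Finset.prod_mul_distrib, Finset.prod_pow_eq_pow_sum, hfkhom m hm]
    ring
  calc eval (Sum.elim x fun i => t * q i) fk
      = ∑ m ∈ fk.support, eval (Sum.elim x fun i => t * q i) (monomial m (coeff m fk)) := by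
        rw [← map_sum, ← fk.as_sum]
    _ = ∑ m ∈ fk.support, t ^ k * eval (Sum.elim x q) (monomial m (coeff m fk)) :=
        Finset.sum_congr rfl key
    _ = t ^ k * eval (Sum.elim x q) fk := by rw [← Finset.mul_sum, ← map_sum, ← fk.as_sum]

end Hom


/-- Theorem 1.3 of the paper, in coordinates: `Z = 𝔸^{c+d}` with
coordinates `x_i` (`i : Fin c`, the `inl` variables) and `y_j` (`j : Fin d`, the `inr`
variables), `X = V(y_1,…,y_d)` a smooth center of codimension `d` with ideal `I`, and
`Y = V(f)` an effective divisor with `f ∈ I^k`, `k` maximal (`f ∉ I^{k+1}`).  The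
section `s` on `E_X(Z) = X × ℙ^{d−1} = P_X(C)` is given by the leading form `fk` of `f`
along `X`: `fk` is homogeneous of degree `k` in the `y`-variables and `f − fk ∈ I^{k+1}`.
Assume:
* `Y ∖ X` is smooth;
* the zero scheme of `s` is an effective divisor of `P_X(C)` (`fk` does not vanish
  identically on any fiber) and is smooth (no singular point of `V(fk)` with `y ≠ 0`).
Then in each standard chart `j` of the blow-up `Bl_X Z` (substituting
`y_i ↦ y_j·y_i` for `i ≠ j`) the total transform of `f` is `y_j^k · g_j` where `g_j`
is an equation of the strict transform `Ỹ`; and: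
* `Ỹ = π^*Y − k·E_X(Z)`, i.e. `g_j` is not divisible by `y_j`;
* `Ỹ` is smooth;
* the exceptional divisor `Ỹ ∩ E_X(Z)` is the zero scheme of `s`: modulo `y_j`,
  `g_j` agrees with the dehomogenization of `fk` in the chart `j`. -/
theorem strict_transform_smooth_of_smooth_section
    (F : Type*) [Field F] [IsAlgClosed F] (c d k : ℕ) (hd : 1 ≤ d)
    (f : MvPolynomial (Fin c ⊕ Fin d) F)
    (I : Ideal (MvPolynomial (Fin c ⊕ Fin d) F))
    (hI : I = Ideal.span (Set.range fun j : Fin d => X (Sum.inr j)))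
    (hfk : f ∈ I ^ k) (hfk' : f ∉ I ^ (k + 1))
    -- the leading form fk of f along X (the section s of O(k) ⊗ π^* O(Y)|_X)
    (fk : MvPolynomial (Fin c ⊕ Fin d) F)
    (hfkhom : ∀ m ∈ fk.support, (∑ j : Fin d, m (Sum.inr j)) = k)
    (hlead : f - fk ∈ I ^ (k + 1))
    -- Y ∖ X is smooth
    (hYX : ∀ p : Fin c ⊕ Fin d → F, eval p f = 0 → (∃ j, p (Sum.inr j) ≠ 0) →
      ∃ v, eval p (pderiv v f) ≠ 0)
    -- Z(s) is an effective divisor of E_X(Z) = X × ℙ^{d-1} …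
    (hdiv : ∀ x : Fin c → F, ∃ q : Fin d → F, eval (Sum.elim x q) fk ≠ 0)
    -- … and is smooth
    (hssm : ∀ (x : Fin c → F) (q : Fin d → F), q ≠ 0 →
      eval (Sum.elim x q) fk = 0 →
      ∃ v, eval (Sum.elim x q) (pderiv v fk) ≠ 0)
    -- the chart substitutions y_i ↦ y_j y_i (i ≠ j) of the blow-up
    (subst : Fin d → (Fin c ⊕ Fin d) → MvPolynomial (Fin c ⊕ Fin d) F)
    (hsubst : ∀ j, subst j = Sum.elim (fun i => X (Sum.inl i))
      (fun i => if i = j then X (Sum.inr j) else X (Sum.inr j) * X (Sum.inr i)))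
    -- the strict transform: f ∘ subst j = y_j^k · g j
    (g : Fin d → MvPolynomial (Fin c ⊕ Fin d) F)
    (hg : ∀ j, bind₁ (subst j) f = X (Sum.inr j) ^ k * g j) :
    ∀ j : Fin d,
      -- Ỹ = π^*Y − k E_X(Z): g j is a strict (not total) transform in the chart
      g j ∉ Ideal.span {(X (Sum.inr j) : MvPolynomial (Fin c ⊕ Fin d) F)} ∧
      -- Ỹ is smooth
      (∀ p : Fin c ⊕ Fin d → F, eval p (g j) = 0 →
        ∃ v, eval p (pderiv v (g j)) ≠ 0) ∧
      -- Ỹ ∩ E_X(Z) = Z(s): modulo y_j, g j is the dehomogenization of fk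
      g j - bind₁ (fun v => if v = Sum.inr j then 1 else X v) fk
        ∈ Ideal.span {(X (Sum.inr j) : MvPolynomial (Fin c ⊕ Fin d) F)} := by
  intro j
  classical
  set yj : MvPolynomial (Fin c ⊕ Fin d) F := X (Sum.inr j) with hyj
  set δ : (Fin c ⊕ Fin d) → MvPolynomial (Fin c ⊕ Fin d) F :=
    fun v => if v = Sum.inr j then 1 else X v with hδ
  set D : MvPolynomial (Fin c ⊕ Fin d) F := bind₁ δ fk with hDdef
  have hsj := hsubst j
  have hXne : yj ≠ 0 := X_ne_zero _
  -- (A) substitution of the leading form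
  have hfkσ : bind₁ (subst j) fk = yj ^ k * D := by
    rw [hDdef, hδ, hyj, hsj]; exact hom_bind_subst j k fk hfkhom
  -- (B) substitution of the remainder
  have hmap : ∃ h, bind₁ (subst j) (f - fk) = yj ^ (k + 1) * h := by
    have h1 : Ideal.map (bind₁ (subst j)) I ≤ Ideal.span {yj} := by
      rw [hI, Ideal.map_span]
      refine Ideal.span_le.mpr ?_
      rintro _ ⟨_, ⟨i, rfl⟩, rfl⟩
      rw [SetLike.mem_coe, Ideal.mem_span_singleton, bind₁_X_right, hsj]
      simp only [Sum.elim_inr]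
      split_ifs with hij
      · subst hij; exact dvd_refl _
      · exact dvd_mul_right _ _
    have h2 : bind₁ (subst j) (f - fk) ∈ Ideal.span {yj} ^ (k + 1) := by
      have hmem := Ideal.mem_map_of_mem (bind₁ (subst j)) hlead
      rw [Ideal.map_pow] at hmem
      exact Ideal.pow_right_mono h1 (k + 1) hmem
    rw [Ideal.span_singleton_pow, Ideal.mem_span_singleton] at h2
    exact h2
  obtain ⟨h, hh⟩ := hmap
  -- key identity
  have hkey : g j = D + yj * h := by
    have e0 : bind₁ (subst j) f = yj ^ k * D + yj ^ (k + 1) * h := by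
      have : bind₁ (subst j) f = bind₁ (subst j) fk + bind₁ (subst j) (f - fk) := by
        rw [← map_add]; congr 1; ring
      rw [this, hfkσ, hh]
    have e1 : yj ^ k * g j = yj ^ k * (D + yj * h) := by
      rw [← hg j, e0, pow_succ]; ring
    exact mul_left_cancel₀ (pow_ne_zero _ hXne) e1
  -- eval facts about D
  have hevalD : ∀ p : (Fin c ⊕ Fin d) → F,
      eval p D = eval (fun v => if v = Sum.inr j then 1 else p v) fk := by
    intro p
    rw [hDdef, my_eval_bind₁]
    have hpt : (fun u => eval p (δ u)) = fun v => if v = Sum.inr j then 1 else p v := by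
      funext v
      by_cases hv : v = Sum.inr j <;> simp [hδ, hv]
    rw [hpt]
  -- D ≠ 0
  have hDne : D ≠ 0 := by
    intro h0
    have hvan : ∀ p : (Fin c ⊕ Fin d) → F, p (Sum.inr j) * eval p fk = 0 := by
      intro p
      rcases eq_or_ne (p (Sum.inr j)) 0 with hp | hp
      · rw [hp, zero_mul]
      · set x : Fin c → F := fun i => p (Sum.inl i) with hx
        set q : Fin d → F := fun i => p (Sum.inr i) with hq
        have hpe : p = Sum.elim x q := by funext v; cases v <;> rfl
        set q' : Fin d → F := fun i => (p (Sum.inr j))⁻¹ * q i with hq'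
        have hqq : (fun i => p (Sum.inr j) * q' i) = q := by
          funext i
          rw [hq']
          field_simp
        have hone : eval (Sum.elim x q') fk = 0 := by
          have h1 : (fun v => if v = Sum.inr j then (1:F) else Sum.elim x q' v)
              = Sum.elim x q' := by
            funext v
            by_cases hv : v = Sum.inr j
            · subst hv
              simp [hq', hq, inv_mul_cancel₀ hp]
            · rw [if_neg hv]
          have h2 := hevalD (Sum.elim x q')
          rw [h0, h1, map_zero] at h2
          exact h2.symm
        have h3 : eval (Sum.elim x q) fk = 0 := by
          rw [← hqq, hom_scale k fk hfkhom, hone, mul_zero]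
        rw [hpe, h3, mul_zero]
    have hprod : yj * fk = 0 := by
      apply MvPolynomial.funext
      intro p
      rw [map_mul, map_zero, hyj, eval_X]
      exact hvan p
    have hfk0 : fk = 0 := by
      rcases mul_eq_zero.mp hprod with h1 | h1
      · exact absurd h1 hXne
      · exact h1
    obtain ⟨q0, hq0⟩ := hdiv 0
    exact hq0 (by rw [hfk0, map_zero])
  -- D not in (yj)
  have hDnot : D ∉ Ideal.span {yj} := by
    intro hmem
    obtain ⟨u, hu⟩ := Ideal.mem_span_singleton.mp hmem
    apply hDne
    have h1 : bind₁ (fun v => if v = Sum.inr j then (0 : MvPolynomial (Fin c ⊕ Fin d) F)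
        else X v) D = D := by
      rw [hDdef, bind₁_bind₁]
      have hpt : (fun v => bind₁ (fun v => if v = Sum.inr j
          then (0 : MvPolynomial (Fin c ⊕ Fin d) F) else X v) (δ v)) = δ := by
        funext v
        by_cases hv : v = Sum.inr j
        · subst hv; simp [hδ]
        · simp [hδ, hv]
      rw [hpt]
    rw [hu] at h1
    have h2 : bind₁ (fun v => if v = Sum.inr j then (0 : MvPolynomial (Fin c ⊕ Fin d) F)
        else X v) yj = 0 := by
      rw [hyj, bind₁_X_right]; simp
    rw [map_mul, h2, zero_mul] at h1
    rw [hu, ← h1]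
  refine ⟨?_, ?_, ?_⟩
  · -- part 1
    intro hmem
    apply hDnot
    have h2 : yj * h ∈ Ideal.span {yj} := Ideal.mem_span_singleton.mpr ⟨h, rfl⟩
    have h3 := Ideal.sub_mem _ hmem h2
    have h4 : D = g j - yj * h := by rw [hkey]; ring
    rw [h4]; exact h3
  · -- part 2: smoothness
    intro p hp0
    by_contra hcon
    push_neg at hcon
    by_cases hpj : p (Sum.inr j) = 0
    · -- on the exceptional divisor
      set P : (Fin c ⊕ Fin d) → F := fun v => if v = Sum.inr j then 1 else p v with hP
      set x : Fin c → F := fun i => p (Sum.inl i) with hx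
      set q : Fin d → F := fun i => if i = j then 1 else p (Sum.inr i) with hq
      have hPel : P = Sum.elim x q := by
        funext v
        cases v with
        | inl i => simp [hP, hx]
        | inr i =>
            by_cases hij : i = j
            · subst hij; simp [hP, hq]
            · simp [hP, hq, hij]
      have hqne : q ≠ 0 := by
        intro h0
        have h1 := congrFun h0 j
        simp [hq] at h1
      have hgD : eval p (g j) = eval p D := by
        rw [hkey, map_add, map_mul, hyj, eval_X, hpj, zero_mul, add_zero]
      have hfkP : eval P fk = 0 := by
        have h1 := hevalD p
        rw [← hP] at h1
        rw [← h1, ← hgD]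
        exact hp0
      have hDder : ∀ v : Fin c ⊕ Fin d, v ≠ Sum.inr j →
          eval p (pderiv v D) = eval P (pderiv v fk) := by
        intro v hv
        have h1 : pderiv v D = bind₁ δ (pderiv v fk) := by
          rw [hDdef, my_pderiv_bind₁]
          rw [Finset.sum_eq_single v]
          · have hXv : δ v = X v := by simp [hδ, hv]
            rw [hXv, my_pdX, if_pos rfl, mul_one]
          · intro u _ hu
            by_cases huj : u = Sum.inr j
            · subst huj
              have h1 : δ (Sum.inr j) = 1 := by simp [hδ]
              rw [h1, pderiv_one, mul_zero]
            · have h1 : δ u = X u := by simp [hδ, huj]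
              rw [h1, my_pdX, if_neg (Ne.symm hu), mul_zero]
          · intro habs; exact absurd (Finset.mem_univ v) habs
        have h2 : eval p (bind₁ δ (pderiv v fk)) = eval P (pderiv v fk) := by
          rw [my_eval_bind₁]
          have hpt : (fun u => eval p (δ u)) = P := by
            funext u
            by_cases hu : u = Sum.inr j <;> simp [hδ, hP, hu]
          rw [hpt]
        rw [h1, h2]
      have hvan : ∀ v : Fin c ⊕ Fin d, v ≠ Sum.inr j → eval P (pderiv v fk) = 0 := by
        intro v hv
        have h2 : eval p (pderiv v (g j)) = eval P (pderiv v fk) := by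
          have e1 : eval p yj = 0 := by rw [hyj, eval_X]; exact hpj
          have e2 : pderiv v yj = 0 := by rw [hyj, my_pdX, if_neg hv]
          simp only [hkey, map_add, pderiv_mul, map_mul, e1, e2, map_zero, zero_mul,
            mul_zero, add_zero]
          exact hDder v hv
        rw [← h2]
        exact hcon v
      obtain ⟨v, hv⟩ := hssm x q hqne (by rw [← hPel]; exact hfkP)
      rw [← hPel] at hv
      by_cases hvj : v = Sum.inr j
      · subst hvj
        have hsum : ∑ i : Fin d, eval P (X (Sum.inr i) * pderiv (Sum.inr i) fk)
            = eval P (pderiv (Sum.inr j) fk) := by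
          rw [Finset.sum_eq_single j]
          · rw [map_mul, eval_X]
            have h1 : P (Sum.inr j) = 1 := by simp [hP]
            rw [h1, one_mul]
          · intro i _ hij
            rw [map_mul, hvan (Sum.inr i) (by simp [hij]), mul_zero]
          · intro habs; exact absurd (Finset.mem_univ j) habs
        have heu := congrArg (eval P) (hom_euler k fk hfkhom)
        rw [map_sum, hsum, map_mul, eval_C, hfkP, mul_zero] at heu
        exact hv heu
      · exact hv (hvan v hvj)
    · -- off the exceptional divisor
      set P : (Fin c ⊕ Fin d) → F := fun u => eval p (subst j u) with hP
      have hev : ∀ φ : MvPolynomial (Fin c ⊕ Fin d) F,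
          eval p (bind₁ (subst j) φ) = eval P φ := by
        intro φ; rw [my_eval_bind₁, hP]
      have hPj : P (Sum.inr j) ≠ 0 := by
        have h1 : P (Sum.inr j) = p (Sum.inr j) := by
          rw [hP]; simp [hsj]
        rw [h1]; exact hpj
      have hfP : eval P f = 0 := by
        rw [← hev f, hg j, map_mul, hp0, mul_zero]
      have hall : ∀ v, eval p (pderiv v (bind₁ (subst j) f)) = 0 := by
        intro v
        rw [hg j, pderiv_mul, map_add, map_mul, map_mul, hp0, hcon v, mul_zero, mul_zero,
          add_zero]
      have hrow : ∀ v, ∑ u : Fin c ⊕ Fin d,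
          eval P (pderiv u f) * eval p (pderiv v (subst j u)) = 0 := by
        intro v
        calc ∑ u : Fin c ⊕ Fin d, eval P (pderiv u f) * eval p (pderiv v (subst j u))
            = ∑ u : Fin c ⊕ Fin d,
              eval p (bind₁ (subst j) (pderiv u f) * pderiv v (subst j u)) := by
              refine Finset.sum_congr rfl fun u _ => ?_
              rw [map_mul, hev]
          _ = eval p (pderiv v (bind₁ (subst j) f)) := by
              rw [my_pderiv_bind₁, map_sum]
          _ = 0 := hall v
      have hM : ∀ v u : Fin c ⊕ Fin d, eval p (pderiv v (subst j u)) =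
          Sum.elim (fun i => if v = Sum.inl i then (1:F) else 0)
            (fun i => if i = j then (if v = Sum.inr j then 1 else 0)
              else (if v = Sum.inr j then p (Sum.inr i) else 0)
                + (if v = Sum.inr i then p (Sum.inr j) else 0)) u := by
        intro v u
        rw [hsj]
        cases u with
        | inl i =>
            rw [Sum.elim_inl, Sum.elim_inl, my_pdX]
            split_ifs <;> simp
        | inr i =>
            rw [Sum.elim_inr, Sum.elim_inr]
            by_cases hij : i = j
            · subst hij
              rw [if_pos rfl, if_pos rfl, my_pdX]
              split_ifs <;> simp
            · rw [if_neg hij, if_neg hij, pderiv_mul, map_add, map_mul, map_mul,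
                my_pdX, my_pdX]
              split_ifs with h1 h2 h2
              · exfalso; rw [h1] at h2; exact hij (Sum.inr.inj h2).symm
              · simp
              · simp
              · simp
      have hinl : ∀ i : Fin c, eval P (pderiv (Sum.inl i) f) = 0 := by
        intro i0
        have hr := hrow (Sum.inl i0)
        rw [Fintype.sum_sum_type] at hr
        have e2 : ∑ i : Fin d, eval P (pderiv (Sum.inr i) f)
            * eval p (pderiv (Sum.inl i0) (subst j (Sum.inr i))) = 0 := by
          refine Finset.sum_eq_zero fun i _ => ?_
          rw [hM]; simp
        have e1 : ∑ i : Fin c, eval P (pderiv (Sum.inl i) f)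
            * eval p (pderiv (Sum.inl i0) (subst j (Sum.inl i)))
            = eval P (pderiv (Sum.inl i0) f) := by
          rw [Finset.sum_eq_single i0]
          · rw [hM]; simp
          · intro i _ hii
            rw [hM]; simp [Ne.symm hii]
          · intro habs; exact absurd (Finset.mem_univ i0) habs
        rw [e1, e2, add_zero] at hr
        exact hr
      have hinr : ∀ i : Fin d, i ≠ j → eval P (pderiv (Sum.inr i) f) = 0 := by
        intro i0 hi0
        have hr := hrow (Sum.inr i0)
        rw [Fintype.sum_sum_type] at hr
        have e1 : ∑ i : Fin c, eval P (pderiv (Sum.inl i) f)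
            * eval p (pderiv (Sum.inr i0) (subst j (Sum.inl i))) = 0 := by
          refine Finset.sum_eq_zero fun i _ => ?_
          rw [hM]; simp
        have e2 : ∑ i : Fin d, eval P (pderiv (Sum.inr i) f)
            * eval p (pderiv (Sum.inr i0) (subst j (Sum.inr i)))
            = eval P (pderiv (Sum.inr i0) f) * p (Sum.inr j) := by
          rw [Finset.sum_eq_single i0]
          · rw [hM]; simp [hi0]
          · intro i _ hii
            rw [hM]
            by_cases hij : i = j
            · subst hij; simp [hi0]
            · simp [hij, Ne.symm hii, hi0]
          · intro habs; exact absurd (Finset.mem_univ i0) habs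
        rw [e1, e2, zero_add] at hr
        exact (mul_eq_zero.mp hr).resolve_right hpj
      have hinrj : eval P (pderiv (Sum.inr j) f) = 0 := by
        have hr := hrow (Sum.inr j)
        rw [Fintype.sum_sum_type] at hr
        have e1 : ∑ i : Fin c, eval P (pderiv (Sum.inl i) f)
            * eval p (pderiv (Sum.inr j) (subst j (Sum.inl i))) = 0 := by
          refine Finset.sum_eq_zero fun i _ => ?_
          rw [hM]; simp
        have e2 : ∑ i : Fin d, eval P (pderiv (Sum.inr i) f)
            * eval p (pderiv (Sum.inr j) (subst j (Sum.inr i)))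
            = eval P (pderiv (Sum.inr j) f) := by
          rw [Finset.sum_eq_single j]
          · rw [hM]; simp
          · intro i _ hij
            rw [hM, hinr i hij]; simp
          · intro habs; exact absurd (Finset.mem_univ j) habs
        rw [e1, e2, zero_add] at hr
        exact hr
      obtain ⟨u, hu⟩ := hYX P hfP ⟨j, hPj⟩
      cases u with
      | inl i => exact hu (hinl i)
      | inr i =>
          by_cases hij : i = j
          · subst hij; exact hu hinrj
          · exact hu (hinr i hij)
  · -- part 3
    have h4 : g j - D = yj * h := by rw [hkey]; ring
    rw [h4]
    exact Ideal.mem_span_singleton.mpr ⟨h, rfl⟩
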